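/- arXiv:2605.09071 — 2 statements merged into one kernel-verified Lean document; each statement's English description precedes it below -/
import Mathlib

section
/- Let α, β : ℝ → ℝ with α differentiable, 0 < α(t) < 1 for all t, and α'(t) = −β(t)·α(t). Let E : ℝ → ℝ^d, and let x : ℝ → ℝ^d be differentiable with x'(t) = −(1/2)·β(t) • x(t) + (β(t)/(2·√(1−α(t)))) • E(t) for all t. Then the scaled state x̃(t) = (α(t))^{−1/2} • x(t) is differentiable with x̃'(t) = (β(t)/(2·√(α(t)·(1−α(t))))) • E(t) for all t. -/
/-!
Since `α' = -βα`, the factor `c = α^{-1/2}` satisfies `c'(t) = (β(t)/2) c(t)`, so it is an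
integrating factor for the linear part `-(β/2) x` of the ODE: in the product rule for `c • x` the
terms in `x` cancel, leaving `c • ((β/(2√(1-α))) • E)`.
-/

open Real

theorem HasDerivAt.smul_of_integratingFactor {E : Type*} [NormedAddCommGroup E] [NormedSpace ℝ E]
    {c : ℝ → ℝ} {x : ℝ → E} {k : ℝ} {v : E} {t : ℝ}
    (hc : HasDerivAt c (k * c t) t) (hx : HasDerivAt x (-k • x t + v) t) :
    HasDerivAt (fun s => c s • x s) (c t • v) t := by
  refine (hc.smul hx).congr_deriv ?_
  rw [smul_add, smul_smul, add_right_comm, ← add_smul, mul_neg, mul_comm, neg_add_cancel,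
    zero_smul, zero_add]

theorem hasDerivAt_inv_sqrt_of_hasDerivAt_neg_mul {α : ℝ → ℝ} {b t : ℝ} (hpos : 0 < α t)
    (hα : HasDerivAt α (-(b * α t)) t) :
    HasDerivAt (fun s => (√(α s))⁻¹) (1 / 2 * b * (√(α t))⁻¹) t := by
  have hsqrt : √(α t) ≠ 0 := (sqrt_pos.2 hpos).ne'
  refine ((hα.sqrt hpos.ne').inv hsqrt).congr_deriv ?_
  rw [sq_sqrt hpos.le]
  field_simp

theorem inv_sqrt_mul_div_sqrt_one_sub {a : ℝ} (ha : 0 ≤ a) (b : ℝ) :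
    (√a)⁻¹ * (b / (2 * √(1 - a))) = b / (2 * √(a * (1 - a))) := by
  rw [sqrt_mul ha, div_eq_mul_inv, div_eq_mul_inv, mul_inv, mul_inv, mul_inv]
  ring

theorem scaled_state_hasDerivAt_general
    {d : ℕ} (α β : ℝ → ℝ)
    (hα0 : ∀ t, 0 < α t)
    (hα' : ∀ t, HasDerivAt α (-(β t * α t)) t)
    (e x : ℝ → EuclideanSpace ℝ (Fin d))
    (hx : ∀ t, HasDerivAt x
      ((-(1 / 2 * β t)) • x t + (β t / (2 * Real.sqrt (1 - α t))) • e t) t) :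
    ∀ t, HasDerivAt (fun t => (Real.sqrt (α t))⁻¹ • x t)
      ((β t / (2 * Real.sqrt (α t * (1 - α t)))) • e t) t := by
  intro t
  have hscale := hasDerivAt_inv_sqrt_of_hasDerivAt_neg_mul (hα0 t) (hα' t)
  have h := hscale.smul_of_integratingFactor (hx t)
  rwa [smul_smul, inv_sqrt_mul_div_sqrt_one_sub (hα0 t).le] at h

/-- Change of variables for the VP-SDE probability-flow ODE: if
`x'(t) = −(1/2)β(t) • x(t) + (β(t)/(2√(1−α(t)))) • E(t)` and `α'(t) = −β(t)α(t)`
with `0 < α(t) < 1`, then the scaled state `x̃(t) = (α(t))^{−1/2} • x(t)` satisfies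
`x̃'(t) = (β(t)/(2√(α(t)(1−α(t))))) • E(t)`. -/
theorem scaled_state_hasDerivAt
    {d : ℕ} (α β : ℝ → ℝ)
    (hα0 : ∀ t, 0 < α t) (hα1 : ∀ t, α t < 1)
    (hα' : ∀ t, HasDerivAt α (-(β t * α t)) t)
    (e x : ℝ → EuclideanSpace ℝ (Fin d))
    (hx : ∀ t, HasDerivAt x
      ((-(1 / 2 * β t)) • x t + (β t / (2 * Real.sqrt (1 - α t))) • e t) t) :
    ∀ t, HasDerivAt (fun t => (Real.sqrt (α t))⁻¹ • x t)
      ((β t / (2 * Real.sqrt (α t * (1 - α t)))) • e t) t :=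
  scaled_state_hasDerivAt_general α β hα0 hα' e x hx
end

section
/- Let α, β : ℝ → ℝ with α differentiable, 0 < α(t) < 1 for all t, and α'(t) = −β(t)·α(t). Let E : ℝ → ℝ^d, and let x : ℝ → ℝ^d be differentiable with x'(t) = −(1/2)·β(t) • x(t) + (β(t)/(2·√(1−α(t)))) • E(t) for all t. Define σ(t) = √((1−α(t))/α(t)) and x̃(t) = (α(t))^{−1/2} • x(t). Then for all t, x̃ has derivative x̃'(t) = σ'(t) • E(t), where σ'(t) denotes the derivative of σ at t. -/
/-!
Since `α' = -β α`, the factor `α^{-1/2}` has derivative `(β/2) α^{-1/2}`, which cancels the drift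
term `-(β/2) x` of the ODE after the product rule. What remains is `α^{-1/2} β / (2√(1-α)) • E`,
and `β / (2√(α(1-α)))` is exactly the derivative of `σ = √((1-α)/α)`.
-/

open Real

section

variable {f : ℝ → ℝ} {f' t : ℝ}

theorem HasDerivAt.inv_sqrt (hf : HasDerivAt f f' t) (hpos : 0 < f t) :
    HasDerivAt (fun s => (√(f s))⁻¹) (-f' / (2 * f t * √(f t))) t := by
  have hsqrt : 0 < √(f t) := sqrt_pos.2 hpos
  refine ((hf.sqrt hpos.ne').inv hsqrt.ne').congr_deriv ?_
  rw [sq_sqrt hpos.le]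
  field_simp

theorem HasDerivAt.sqrt_one_sub_div_self (hf : HasDerivAt f f' t) (hpos : 0 < f t)
    (hlt : f t < 1) :
    HasDerivAt (fun s => √((1 - f s) / f s)) (-f' / (2 * f t * √(f t * (1 - f t)))) t := by
  have hsub : 0 < 1 - f t := by linarith
  have hquot : HasDerivAt (fun s => (1 - f s) / f s)
      (((0 - f') * f t - (1 - f t) * f') / f t ^ 2) t :=
    ((hasDerivAt_const t 1).sub hf).div hf hpos.ne'
  refine (hquot.sqrt (div_pos hsub hpos).ne').congr_deriv ?_
  rw [sqrt_div hsub.le, sqrt_mul hpos.le]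
  have hsq := sq_sqrt hpos.le
  field_simp
  linear_combination (-f') * hsq

end

/-- The reparameterized DDIM probability-flow ODE: under the VP-SDE PF-ODE dynamics
`x'(t) = −(1/2)β(t) • x(t) + (β(t)/(2√(1−α(t)))) • E(t)` with `α'(t) = −β(t)α(t)`
and `0 < α(t) < 1`, the scaled state `x̃(t) = (α(t))^{−1/2} • x(t)` satisfies
`x̃'(t) = σ'(t) • E(t)`, where `σ(t) = √((1−α(t))/α(t))`. -/
theorem scaled_state_hasDerivAt_deriv_snr_smul
    {d : ℕ} (α β : ℝ → ℝ)
    (hα0 : ∀ t, 0 < α t) (hα1 : ∀ t, α t < 1)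
    (hα' : ∀ t, HasDerivAt α (-(β t * α t)) t)
    (e x : ℝ → EuclideanSpace ℝ (Fin d))
    (hx : ∀ t, HasDerivAt x
      ((-(1 / 2 * β t)) • x t + (β t / (2 * Real.sqrt (1 - α t))) • e t) t)
    (σ : ℝ → ℝ) (hσ : ∀ t, σ t = Real.sqrt ((1 - α t) / α t)) :
    ∀ t, HasDerivAt (fun t => (Real.sqrt (α t))⁻¹ • x t) (deriv σ t • e t) t := by
  intro t
  have hpos := hα0 t
  have hσ' : deriv σ t = β t / (2 * √(α t * (1 - α t))) := by
    rw [funext hσ, ((hα' t).sqrt_one_sub_div_self hpos (hα1 t)).deriv]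
    field_simp
  refine (((hα' t).inv_sqrt hpos).smul (hx t)).congr_deriv ?_
  have hdrift : (√(α t))⁻¹ * -(1 / 2 * β t) + -(-(β t * α t)) / (2 * α t * √(α t)) = 0 := by
    field_simp
    ring
  rw [hσ', sqrt_mul hpos.le, smul_add, smul_smul, smul_smul, add_right_comm, ← add_smul, hdrift,
    zero_smul, zero_add]
  congr 1
  field_simp
end
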